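/- Let u ∈ C^∞([0,∞)×ℝ) be a global classical nonnegative solution of the aggregation equation with initial data u₀ ∈ C_c^∞(ℝ), u₀ ≥ 0, supp u₀ ⊂ [−L, L], such that ‖u(t,·)‖₁ = ‖u₀‖₁ for all t ≥ 0, and let X(t,α) solve the characteristic ODE dX/dt(t,α) = (∂_x K * u)(t, X(t,α)), X(0,α) = α. If supp u(t,·) ⊂ [X(t,−L), X(t,L)] ⊂ [−L, L] for all t ≥ 0, then the left edge of the support moves with speed bounded below uniformly in time: (d/dt)X(t,−L) = ∫_{X(t,−L)}^{X(t,L)} e^{-|X(t,−L) − y|} u(t,y) dy ≥ e^{−2L} ‖u₀‖₁ for all t ≥ 0. Consequently, if u₀ is not identically zero, X(t,−L) grows at least linearly in t, contradicting X(t,−L) ∈ [−L, L]; hence no such global solution exists. -/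

import Mathlib

open MeasureTheory Real Set Filter
open scoped ENNReal Topology

noncomputable section

/-- The kernel `K(x) = e^{-|x|}`. -/
def Kker (x : ℝ) : ℝ := Real.exp (-|x|)

/-- Its derivative `∂ₓK(x) = -sign(x) e^{-|x|}`. -/
def dKker (x : ℝ) : ℝ := -(Real.sign x) * Real.exp (-|x|)

/-- Spatial convolution on `ℝ`: `(f * g)(x) = ∫ f(x-y) g(y) dy`. -/
def convol (f g : ℝ → ℝ) (x : ℝ) : ℝ := ∫ y : ℝ, f (x - y) * g y

/-- `L^p` norm (in the spatial variable). -/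
def LpN (p : ℝ≥0∞) (f : ℝ → ℝ) : ℝ≥0∞ := eLpNorm f p volume

/-- Sobolev `H^m` norm: sum of the `L²` norms of the derivatives of order `≤ m`. -/
def HN (m : ℕ) (f : ℝ → ℝ) : ℝ≥0∞ := ∑ j ∈ Finset.range (m + 1), LpN 2 (iteratedDeriv j f)

/-- Membership in `H^m(ℝ)` (with a `C^m` representative). -/
def MemH (m : ℕ) (f : ℝ → ℝ) : Prop :=
  ContDiff ℝ m f ∧ ∀ j ≤ m, MemLp (iteratedDeriv j f) 2 volume

/-- Membership in `⋂ₘ H^m(ℝ)` (with the smooth representative). -/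
def InAllH (f : ℝ → ℝ) : Prop :=
  ContDiff ℝ (⊤ : ℕ∞) f ∧ ∀ m : ℕ, MemLp (iteratedDeriv m f) 2 volume

/-- `u ∈ C(s; H^m)`. -/
def ContInH (m : ℕ) (u : ℝ → ℝ → ℝ) (s : Set ℝ) : Prop :=
  (∀ t ∈ s, MemH m (u t)) ∧
  ∀ t₀ ∈ s, Tendsto (fun t => HN m (fun x => u t x - u t₀ x)) (nhdsWithin t₀ s) (nhds 0)

/-- `u ∈ C(s; L^p)`. -/
def ContInLp (p : ℝ≥0∞) (u : ℝ → ℝ → ℝ) (s : Set ℝ) : Prop :=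
  (∀ t ∈ s, MemLp (u t) p volume) ∧
  ∀ t₀ ∈ s, Tendsto (fun t => LpN p (fun x => u t x - u t₀ x)) (nhdsWithin t₀ s) (nhds 0)

/-- `L²([0,T]; H^m)` norm. -/
def L2HN (m : ℕ) (T : ℝ) (v : ℝ → ℝ → ℝ) : ℝ≥0∞ :=
  (∫⁻ t in Icc (0:ℝ) T, (HN m (v t)) ^ 2) ^ (1/2 : ℝ)

/-- Pointwise time derivative `∂ₜu`. -/
def dt (u : ℝ → ℝ → ℝ) (t x : ℝ) : ℝ := deriv (fun s => u s x) t

/-- The function space `B^k_T`: `v ∈ C([0,T];H^{2k+1})` with `∂ₓₓv, ∂ₜv ∈ L²([0,T];H^{2k})`. -/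
def MemB (k : ℕ) (T : ℝ) (v : ℝ → ℝ → ℝ) : Prop :=
  ContInH (2*k+1) v (Icc 0 T) ∧
  L2HN (2*k) T (fun t x => iteratedDeriv 2 (v t) x) < ⊤ ∧
  L2HN (2*k) T (dt v) < ⊤

/-- The function space `D^k_T`: `v ∈ C([0,T];H^{2k}) ∩ L^∞(0,T;H^{2k+1})` with
`∂ₜ v, v² ∂ₓₓ v ∈ L²(0,T;H^{2k})`. -/
def MemD (k : ℕ) (T : ℝ) (v : ℝ → ℝ → ℝ) : Prop :=
  ContInH (2*k) v (Icc 0 T) ∧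
  (∃ M : ℝ≥0∞, M < ⊤ ∧ ∀ t ∈ Icc (0:ℝ) T, HN (2*k+1) (v t) ≤ M) ∧
  L2HN (2*k) T (dt v) < ⊤ ∧
  L2HN (2*k) T (fun t x => (v t x)^2 * iteratedDeriv 2 (v t) x) < ⊤

/-- `u ∈ C^∞(s × ℝ)`, jointly in time and space. -/
def SmoothOnT (u : ℝ → ℝ → ℝ) (s : Set ℝ) : Prop :=
  ContDiffOn ℝ (⊤ : ℕ∞) (fun p : ℝ × ℝ => u p.1 p.2) (s ×ˢ (univ : Set ℝ))

/-- The aggregation equation `∂ₜu + ∂ₓ(u ∂ₓ(K*u)) = ∂ₓ(u² ∂ₓu)` (with `r = 1`),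
holding at all times in `s`, with initial data `u₀`. -/
def AggEq (u₀ : ℝ → ℝ) (u : ℝ → ℝ → ℝ) (s : Set ℝ) : Prop :=
  (∀ x, u 0 x = u₀ x) ∧
  ∀ t ∈ s, ∀ x : ℝ,
    dt u t x + deriv (fun y => u t y * deriv (convol Kker (u t)) y) x
      = deriv (fun y => (u t y)^2 * deriv (u t) y) x

/-- The regularized equation `∂ₜu = (u²+ε)∂ₓₓu + 2u(∂ₓu)² − ∂ₓ(u (K*∂ₓu))`,
holding at all times in `s`, with initial data `u₀`. -/
def RegEq (ε : ℝ) (u₀ : ℝ → ℝ) (u : ℝ → ℝ → ℝ) (s : Set ℝ) : Prop :=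
  (∀ x, u 0 x = u₀ x) ∧
  ∀ t ∈ s, ∀ x : ℝ,
    dt u t x = ((u t x)^2 + ε) * iteratedDeriv 2 (u t) x
      + 2 * u t x * (deriv (u t) x)^2
      - deriv (fun y => u t y * convol Kker (deriv (u t)) y) x

/-- The time interval `[0, T)` for an extended-real lifespan `T`. -/
def tIco (T : ℝ≥0∞) : Set ℝ := {t : ℝ | 0 ≤ t ∧ ENNReal.ofReal t < T}

/-- The time interval `(0, T)` for an extended-real lifespan `T`. -/
def tIoo (T : ℝ≥0∞) : Set ℝ := {t : ℝ | 0 < t ∧ ENNReal.ofReal t < T}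

/-- A smooth solution of the aggregation equation on `[0,T) × ℝ`, lying in every `H^m`. -/
def IsSolOn (u₀ : ℝ → ℝ) (u : ℝ → ℝ → ℝ) (T : ℝ≥0∞) : Prop :=
  SmoothOnT u (tIco T) ∧ (∀ t ∈ tIco T, InAllH (u t)) ∧ AggEq u₀ u (tIoo T)

/-- A maximal-lifespan smooth solution: it admits no proper extension. -/
def IsMaxSol (u₀ : ℝ → ℝ) (u : ℝ → ℝ → ℝ) (T : ℝ≥0∞) : Prop :=
  0 < T ∧ IsSolOn u₀ u T ∧
  ∀ (T' : ℝ≥0∞) (v : ℝ → ℝ → ℝ), T < T' → IsSolOn u₀ v T' →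
    (∀ t ∈ tIco T, ∀ x, v t x = u t x) → False

/-- A global classical solution of the aggregation equation, smooth on `[0,∞) × ℝ`, whose
spatial derivatives of all orders are bounded on each compact time interval. -/
def GlobalSmoothSol (u : ℝ → ℝ → ℝ) : Prop :=
  SmoothOnT u (Ici 0) ∧
  AggEq (u 0) u (Ioi 0) ∧
  ∀ T : ℝ, 0 < T → ∀ n : ℕ, ∃ M : ℝ, ∀ t ∈ Icc (0:ℝ) T, ∀ x, |iteratedDeriv n (u t) x| ≤ M

/-- `X` solves the characteristic ODE `dX/dt(t,α) = (∂ₓK * u)(t, X(t,α))`, `X(0,α) = α`,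
for all times `t ≥ 0`. -/
def SolvesChar (u : ℝ → ℝ → ℝ) (X : ℝ → ℝ → ℝ) : Prop :=
  ∀ α : ℝ, X 0 α = α ∧
    ∀ t : ℝ, 0 ≤ t →
      HasDerivWithinAt (fun s => X s α) (convol dKker (u t) (X t α)) (Ici 0) t

/-- **Nonexistence of global solutions (proof of Theorem 4).**
For a global nonnegative classical solution with `u₀ ∈ C_c^∞`, `u₀ ≥ 0`,
`supp u₀ ⊆ [−L,L]`, preserved `L¹` norm, and characteristics trapping the support in
`[X(t,−L),X(t,L)] ⊆ [−L,L]`, the left edge speed satisfies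
`(d/dt)X(t,−L) = ∫_{X(t,−L)}^{X(t,L)} e^{−|X(t,−L)−y|} u(t,y) dy ≥ e^{−2L}‖u₀‖₁`;
hence if `u₀ ≢ 0` no such global solution can exist. -/
theorem statement19 (u : ℝ → ℝ → ℝ) (hu : GlobalSmoothSol u)
    (hpos : ∀ t x : ℝ, 0 ≤ t → 0 ≤ u t x)
    (hsm0 : ContDiff ℝ (⊤ : ℕ∞) (u 0)) (hcs : HasCompactSupport (u 0))
    (L : ℝ) (hL : 0 < L) (hsupp0 : tsupport (u 0) ⊆ Icc (-L) L)
    (hL1 : ∀ t : ℝ, 0 ≤ t → LpN 1 (u t) = LpN 1 (u 0))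
    (X : ℝ → ℝ → ℝ) (hX : SolvesChar u X)
    (hsupp : ∀ t : ℝ, 0 ≤ t →
      tsupport (u t) ⊆ Icc (X t (-L)) (X t L) ∧
      Icc (X t (-L)) (X t L) ⊆ Icc (-L) L) :
    (∀ t : ℝ, 0 ≤ t →
      (convol dKker (u t) (X t (-L))
        = ∫ y in (X t (-L))..(X t L), Real.exp (-|X t (-L) - y|) * u t y) ∧
      Real.exp (-2*L) * (LpN 1 (u 0)).toReal ≤ convol dKker (u t) (X t (-L))) ∧
    ((∃ x, u 0 x ≠ 0) → False) := by
  have hcont : ∀ t : ℝ, 0 ≤ t → Continuous (u t) := by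
    intro t ht
    rw [← continuousOn_univ]
    exact hu.1.continuousOn.comp (Continuous.prodMk_right t).continuousOn
      (fun x _ => ⟨ht, trivial⟩)
  have main : ∀ t : ℝ, 0 ≤ t →
      (convol dKker (u t) (X t (-L))
        = ∫ y in (X t (-L))..(X t L), Real.exp (-|X t (-L) - y|) * u t y) ∧
      Real.exp (-2*L) * (LpN 1 (u 0)).toReal ≤ convol dKker (u t) (X t (-L)) := by
    intro t ht
    set a := X t (-L) with ha
    set b := X t L with hb
    have hsuppt := (hsupp t ht).1
    by_cases hab : a ≤ b
    · -- nondegenerate case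
      have haI : a ∈ Icc (-L) L := (hsupp t ht).2 (left_mem_Icc.mpr hab)
      have hbI : b ∈ Icc (-L) L := (hsupp t ht).2 (right_mem_Icc.mpr hab)
      have hzout : ∀ y, y ∉ Icc a b → u t y = 0 := by
        intro y hy
        exact image_eq_zero_of_notMem_tsupport (fun h => hy (hsuppt h))
      have hK : HasCompactSupport (u t) := HasCompactSupport.intro isCompact_Icc hzout
      have hint : Integrable (u t) := (hcont t ht).integrable_of_hasCompactSupport hK
      -- a.e. identification of the convolution integrand
      have hae : (fun y => dKker (a - y) * u t y)
          =ᵐ[volume] (Icc a b).indicator (fun y => Real.exp (-|a - y|) * u t y) := by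
        rw [Filter.EventuallyEq, MeasureTheory.ae_iff]
        refine measure_mono_null (fun y hy => ?_) (Real.volume_singleton (a := a))
        simp only [mem_setOf_eq] at hy
        simp only [mem_singleton_iff]
        by_contra hya
        apply hy
        by_cases hm : y ∈ Icc a b
        · have hay : a < y := lt_of_le_of_ne hm.1 (Ne.symm hya)
          have hneg : a - y < 0 := by linarith
          rw [indicator_of_mem hm]
          unfold dKker
          rw [Real.sign_of_neg hneg]
          ring
        · rw [indicator_of_notMem hm, hzout y hm, mul_zero]
      have hconv : convol dKker (u t) a
          = ∫ y in a..b, Real.exp (-|a - y|) * u t y := by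
        unfold convol
        rw [integral_congr_ae hae, integral_indicator measurableSet_Icc,
          MeasureTheory.integral_Icc_eq_integral_Ioc,
          ← intervalIntegral.integral_of_le hab]
      refine ⟨hconv, ?_⟩
      -- lower bound
      have hIone : (LpN 1 (u 0)).toReal = ∫ y, u t y := by
        rw [← hL1 t ht]
        unfold LpN
        rw [eLpNorm_one_eq_lintegral_enorm, ← ofReal_integral_norm_eq_lintegral_enorm hint,
          ENNReal.toReal_ofReal (integral_nonneg (fun y => norm_nonneg _))]
        congr 1
        funext y
        rw [Real.norm_eq_abs, abs_of_nonneg (hpos t y ht)]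
      have hres : ∫ y, u t y = ∫ y in a..b, u t y := by
        have hieq : u t = (Icc a b).indicator (u t) := by
          funext y
          by_cases hm : y ∈ Icc a b
          · rw [indicator_of_mem hm]
          · rw [indicator_of_notMem hm, hzout y hm]
        conv_lhs => rw [hieq]
        rw [integral_indicator measurableSet_Icc,
          MeasureTheory.integral_Icc_eq_integral_Ioc,
          ← intervalIntegral.integral_of_le hab]
      have hexpc : Continuous (fun y : ℝ => Real.exp (-|a - y|)) := by fun_prop
      have hmono2 : ∫ y in a..b, Real.exp (-(2*L)) * u t y
          ≤ ∫ y in a..b, Real.exp (-|a - y|) * u t y := by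
        apply intervalIntegral.integral_mono_on hab
        · exact (continuous_const.mul (hcont t ht)).intervalIntegrable a b
        · exact (hexpc.mul (hcont t ht)).intervalIntegrable a b
        · intro y hy
          have habs : |a - y| ≤ 2*L := by
            rw [abs_le]
            constructor
            · nlinarith [hy.2, hbI.2, haI.1]
            · nlinarith [hy.1]
          exact mul_le_mul_of_nonneg_right (Real.exp_le_exp.mpr (by linarith))
            (hpos t y ht)
      have h2L : (-2*L : ℝ) = -(2*L) := by ring
      rw [hconv, h2L, hIone, hres, ← intervalIntegral.integral_const_mul]
      exact hmono2
    · -- degenerate case: empty interval forces u t = 0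
      have hz : u t = 0 := by
        funext x
        by_contra hx
        have : x ∈ Icc a b := hsuppt (subset_tsupport _ (by simpa using hx))
        rw [Icc_eq_empty hab] at this
        exact this
      have hc0 : convol dKker (u t) a = 0 := by
        unfold convol
        rw [hz]
        simp
      have hn0 : LpN 1 (u 0) = 0 := by
        rw [← hL1 t ht]
        unfold LpN
        rw [hz]
        exact eLpNorm_zero
      constructor
      · rw [hc0, hz]; simp
      · rw [hc0, hn0]; simp
  refine ⟨main, ?_⟩
  rintro ⟨x0, hx0⟩
  have hu0int : Integrable (u 0) := hsm0.continuous.integrable_of_hasCompactSupport hcs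
  have hne0 : LpN 1 (u 0) ≠ 0 := by
    intro h0
    have h0' : eLpNorm (u 0) 1 volume = 0 := h0
    have hz : u 0 =ᵐ[volume] (0 : ℝ → ℝ) :=
      (eLpNorm_eq_zero_iff hsm0.continuous.aestronglyMeasurable one_ne_zero).mp h0'
    have hzz : u 0 = 0 := (hsm0.continuous.ae_eq_iff_eq volume continuous_const).mp hz
    exact hx0 (by rw [hzz]; rfl)
  have hlt : LpN 1 (u 0) < ⊤ := (memLp_one_iff_integrable.mpr hu0int).2
  set c := Real.exp (-2*L) * (LpN 1 (u 0)).toReal with hc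
  have hcpos : 0 < c := mul_pos (Real.exp_pos _) (ENNReal.toReal_pos hne0 hlt.ne)
  have hXle : ∀ t : ℝ, 0 ≤ t → X t (-L) ≤ L := by
    intro t ht
    by_cases hab : X t (-L) ≤ X t L
    · exact ((hsupp t ht).2 (left_mem_Icc.mpr hab)).2
    · exfalso
      apply hne0
      have hz : u t = 0 := by
        funext x
        by_contra hx
        have : x ∈ Icc (X t (-L)) (X t L) :=
          (hsupp t ht).1 (subset_tsupport _ (by simpa using hx))
        rw [Icc_eq_empty hab] at this
        exact this
      rw [← hL1 t ht]
      unfold LpN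
      rw [hz]
      exact eLpNorm_zero
  set f : ℝ → ℝ := fun s => X s (-L) with hfdef
  have hf0 : f 0 = -L := (hX (-L)).1
  have hder : ∀ s ∈ Ici (0:ℝ), HasDerivWithinAt (fun s => f s - c * s)
      (convol dKker (u s) (f s) - c) (Ici 0) s := by
    intro s hs
    exact ((hX (-L)).2 s hs).sub (by simpa using (hasDerivWithinAt_id s (Ici 0)).const_mul c)
  have hmono : MonotoneOn (fun s => f s - c * s) (Ici 0) := by
    apply monotoneOn_of_deriv_nonneg (convex_Ici 0)
    · exact fun s hs => (hder s hs).continuousWithinAt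
    · intro s hs
      rw [interior_Ici] at hs
      exact ((hder s (mem_Ici.mpr (le_of_lt hs))).hasDerivAt
        (Ici_mem_nhds hs)).differentiableAt.differentiableWithinAt
    · intro s hs
      rw [interior_Ici] at hs
      rw [((hder s (mem_Ici.mpr hs.le)).hasDerivAt (Ici_mem_nhds hs)).deriv]
      have hmain := (main s hs.le).2
      show 0 ≤ convol dKker (u s) (X s (-L)) - c
      linarith
  set T : ℝ := (2*L + 1)/c with hT
  have hTpos : 0 < T := div_pos (by linarith) hcpos
  have h1 : f 0 - c * 0 ≤ f T - c * T :=
    hmono (mem_Ici.mpr le_rfl) (mem_Ici.mpr hTpos.le) hTpos.le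
  have hcT : c * T = 2*L + 1 := by
    rw [hT]
    field_simp
  have hfT := hXle T hTpos.le
  rw [hf0] at h1
  have : f T = X T (-L) := rfl
  linarith
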